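/- With notation as above, let F_i : Prim(H_R)^{⊗i} → H_R send p_i ⊗ ... ⊗ p_1 to p_i ⊤ ... ⊤ p_1. Then Δ̃^{i−1} ∘ F_i = Id on Prim(H_R)^{⊗i} (identifying Prim(H_R)^{⊗i} with its image in H_R^{⊗i}), and Δ̃^k ∘ F_i = 0 for k > i−1. Consequently each F_i is injective and the sum ℚ·1 + Σ_{i≥1} Im(F_i) is direct. -/

import Mathlib

open scoped TensorProduct

section

variable {H : Type} [CommRing H] [Bialgebra ℚ H]

/-- `segAux t q n a = q (a+n) ⊤ ... ⊤ q a`, the iterated natural growth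
(left-nested) for a bilinear operation `t`. -/
def segAux (t : H →ₗ[ℚ] H →ₗ[ℚ] H) (q : ℕ → H) : ℕ → ℕ → H
  | 0, a => q a
  | n + 1, a => t (segAux t q n (a + 1)) (q a)

/-- `seg t q a b = q_b ⊤ ... ⊤ q_a` for `a ≤ b`. -/
def seg (t : H →ₗ[ℚ] H →ₗ[ℚ] H) (q : ℕ → H) (a b : ℕ) : H :=
  segAux t q (b - a) a

/-- The reduced coproduct `Δ̃ = Δ − (x ↦ 1 ⊗ x) − (x ↦ x ⊗ 1)` as a linear map. -/
noncomputable def rcomulL : H →ₗ[ℚ] H ⊗[ℚ] H :=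
  Coalgebra.comul - (TensorProduct.mk ℚ H H 1 + (TensorProduct.mk ℚ H H).flip 1)

/-- The submodule of primitive elements of `H`. -/
noncomputable def PrimSub : Submodule ℚ H :=
  LinearMap.ker (Coalgebra.comul (R := ℚ) (A := H)
    - ((TensorProduct.mk ℚ H H).flip 1 + TensorProduct.mk ℚ H H 1))

/-- `Im t k` is `Im(F_k)`: the span of all `p_k ⊤ ... ⊤ p_1` with the `p_m`
primitive. -/
noncomputable def Im (t : H →ₗ[ℚ] H →ₗ[ℚ] H) (k : ℕ) : Submodule ℚ H :=
  Submodule.span ℚ {x : H | ∃ q : ℕ → H,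
    (∀ m, 1 ≤ m → m ≤ k → q m ∈ PrimSub) ∧ x = seg t q 1 k}

/-- The `(k+1)`-fold tensor power of `H`, nested on the left:
`TBundle 0 = H`, `TBundle (k+1) = TBundle k ⊗ H`. -/
noncomputable def TBundle : ℕ → ModuleCat ℚ
  | 0 => ModuleCat.of ℚ H
  | k + 1 => ModuleCat.of ℚ ((TBundle k : Type) ⊗[ℚ] H)

/-- The iterated reduced coproduct `Δ̃^k : H → H^{⊗(k+1)}`, with
`Δ̃^0 = Id − η∘ε` and `Δ̃^{k} = (Δ̃^{k−1} ⊗ Id) ∘ Δ̃`. -/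
noncomputable def Dtil : (k : ℕ) → H →ₗ[ℚ] (TBundle (H := H) k : Type)
  | 0 => LinearMap.id - ((Algebra.linearMap ℚ H) ∘ₗ Coalgebra.counit)
  | k + 1 => LinearMap.rTensor H (Dtil k) ∘ₗ rcomulL

/-- The pure tensor `q_k ⊗ ... ⊗ q_0` in the left-nested tensor power. -/
noncomputable def pt : (k : ℕ) → (Fin (k + 1) → H) → (TBundle (H := H) k : Type)
  | 0, q => q 0
  | k + 1, q => (pt k (fun m => q m.succ)) ⊗ₜ[ℚ] (q 0)

/-
Applying `Δ̃^{k+1} = (Δ̃^k ⊗ Id) ∘ Δ̃` to the growth formula expresses `Δ̃^{k+1}(p_i ⊤ ⋯ ⊤ p_1)`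
through `Δ̃^k` of the shorter words `p_i ⊤ ⋯ ⊤ p_{j+1}`. By induction on the length, `Δ̃^k` kills
words of length `≤ k`, and in `Δ̃^{i-1}` only the term `j = 1` survives, which peels off `p_1`.
So `Δ̃^{i-1} ∘ F_i` is the inclusion `Prim(H)^{⊗i} → H^{⊗i}`, which a projection `H → Prim H`
inverts factorwise; and on `Im F_i` folding the factors of `Δ̃^{i-1}` back with `⊤` is the
identity. Since `Δ̃^{n-1}` kills `1` and every `Im F_j` with `j < n`, a vanishing sum
`c · 1 + Σ_{j ≤ n} x_j` has `Δ̃^{n-1} x_n = 0`, hence `x_n = 0`, and we descend in `n`.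
-/

def HasGrowthCoproduct (t : H →ₗ[ℚ] H →ₗ[ℚ] H) : Prop :=
  ∀ (q : ℕ → H) (m : ℕ), 1 ≤ m → (∀ k, 1 ≤ k → k ≤ m → q k ∈ PrimSub) →
    rcomulL (seg t q 1 m) = ∑ j ∈ Finset.Icc 1 (m - 1), seg t q (j + 1) m ⊗ₜ[ℚ] seg t q 1 j

lemma Dtil_zero_apply (x : H) :
    Dtil 0 x = x - algebraMap ℚ H (Coalgebra.counit (R := ℚ) x) := rfl

lemma Dtil_succ_apply (k : ℕ) (x : H) :
    Dtil (k + 1) x = LinearMap.rTensor H (Dtil k) (rcomulL x) := rfl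

lemma comul_of_mem_PrimSub {p : H} (hp : p ∈ PrimSub) :
    Coalgebra.comul (R := ℚ) p = p ⊗ₜ[ℚ] 1 + 1 ⊗ₜ[ℚ] p := by
  simpa [PrimSub, sub_eq_zero] using hp

lemma counit_of_mem_PrimSub {p : H} (hp : p ∈ PrimSub) : Coalgebra.counit (R := ℚ) p = 0 := by
  -- `(ε ⊗ Id) Δ p = 1 ⊗ p` reads `ε(p) ⊗ 1 + 1 ⊗ p = 1 ⊗ p`.
  have h := Coalgebra.rTensor_counit_comul (R := ℚ) p
  rw [comul_of_mem_PrimSub hp, map_add, LinearMap.rTensor_tmul, LinearMap.rTensor_tmul,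
    Bialgebra.counit_one, add_eq_right] at h
  have h1 : Coalgebra.counit (R := ℚ) p • (1 : H) = 0 := by
    simpa using congrArg (TensorProduct.lid ℚ H) h
  simpa using congrArg (Coalgebra.counit (R := ℚ) (A := H)) h1

lemma Dtil_zero_of_mem_PrimSub {p : H} (hp : p ∈ PrimSub) : Dtil 0 p = p := by
  rw [Dtil_zero_apply, counit_of_mem_PrimSub hp, map_zero, sub_zero]

lemma Dtil_one (k : ℕ) : Dtil (H := H) k 1 = 0 := by
  induction k with
  | zero =>
    rw [Dtil_zero_apply, Bialgebra.counit_one, map_one, sub_self]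
    rfl
  | succ k ih =>
    have h : rcomulL (1 : H) = -((1 : H) ⊗ₜ[ℚ] (1 : H)) := by
      simp only [rcomulL, LinearMap.sub_apply, LinearMap.add_apply, Bialgebra.comul_one,
        TensorProduct.mk_apply, LinearMap.flip_apply, Algebra.TensorProduct.one_def]
      abel
    rw [Dtil_succ_apply, h, map_neg, LinearMap.rTensor_tmul, ih, TensorProduct.zero_tmul, neg_zero]
    rfl

lemma seg_comp_add_right (t : H →ₗ[ℚ] H →ₗ[ℚ] H) (q : ℕ → H) (s a b : ℕ) :
    seg t (fun n => q (n + s)) a b = seg t q (a + s) (b + s) := by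
  have hshift : ∀ n a, segAux t (fun m => q (m + s)) n a = segAux t q n (a + s) := by
    intro n
    induction n with
    | zero => intro a; rfl
    | succ n ih =>
      intro a
      simp only [segAux, ih, Nat.add_right_comm]
  simp only [seg, hshift, Nat.add_sub_add_right]

section Growth

variable {t : H →ₗ[ℚ] H →ₗ[ℚ] H}

lemma Dtil_succ_seg (ht : HasGrowthCoproduct t) {i : ℕ} {q : ℕ → H}
    (hq : ∀ k, 1 ≤ k → k ≤ i + 1 → q k ∈ PrimSub) (k : ℕ) :
    Dtil (k + 1) (seg t q 1 (i + 1)) = ∑ j ∈ Finset.Icc 1 i,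
      Dtil k (seg t (fun n => q (n + j)) 1 (i + 1 - j)) ⊗ₜ[ℚ] seg t q 1 j := by
  rw [Dtil_succ_apply, ht q (i + 1) (by omega) hq, map_sum, Nat.add_sub_cancel]
  refine Finset.sum_congr rfl fun j hj => ?_
  have hji : j ≤ i := (Finset.mem_Icc.mp hj).2
  rw [LinearMap.rTensor_tmul, seg_comp_add_right, Nat.add_comm 1 j, Nat.sub_add_cancel (by omega)]

lemma Dtil_seg_eq_zero (ht : HasGrowthCoproduct t) (i : ℕ) (q : ℕ → H)
    (hq : ∀ k, 1 ≤ k → k ≤ i + 1 → q k ∈ PrimSub) (k : ℕ) (hik : i < k) :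
    Dtil k (seg t q 1 (i + 1)) = 0 := by
  induction i using Nat.strong_induction_on generalizing q k with
  | _ i ih =>
  obtain ⟨k, rfl⟩ : ∃ k', k = k' + 1 := ⟨k - 1, by omega⟩
  rw [Dtil_succ_seg ht hq]
  refine Finset.sum_eq_zero fun j hj => ?_
  obtain ⟨hj1, hji⟩ := Finset.mem_Icc.mp hj
  rw [show i + 1 - j = i - j + 1 by omega,
    ih (i - j) (by omega) _ (fun n h1 h2 => hq (n + j) (by omega) (by omega)) k (by omega)]
  exact TensorProduct.zero_tmul _ _

lemma Dtil_seg_eq_pt (ht : HasGrowthCoproduct t) (i : ℕ) (q : ℕ → H)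
    (hq : ∀ k, 1 ≤ k → k ≤ i + 1 → q k ∈ PrimSub) :
    Dtil i (seg t q 1 (i + 1)) = pt i (fun m => q (m + 1)) := by
  induction i generalizing q with
  | zero => exact Dtil_zero_of_mem_PrimSub (hq 1 le_rfl le_rfl)
  | succ i ih =>
    have hq' : ∀ k, 1 ≤ k → k ≤ i + 1 → q (k + 1) ∈ PrimSub :=
      fun k h1 h2 => hq (k + 1) (by omega) (by omega)
    rw [Dtil_succ_seg ht hq, Finset.sum_eq_single_of_mem 1 (by simp)]
    · rw [Nat.add_sub_cancel, ih _ hq']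
      rfl
    · intro j hj hj1
      obtain ⟨hj0, hji⟩ := Finset.mem_Icc.mp hj
      rw [show i + 1 + 1 - j = i + 1 - j + 1 by omega,
        Dtil_seg_eq_zero ht _ _ (fun n h1 h2 => hq (n + j) (by omega) (by omega)) i (by omega)]
      exact TensorProduct.zero_tmul _ _

lemma Im_le_ker_Dtil (ht : HasGrowthCoproduct t) {i k : ℕ} (hik : i < k) :
    Im t (i + 1) ≤ LinearMap.ker (Dtil k) :=
  Submodule.span_le.2 fun _ ⟨q, hq, hx⟩ => hx ▸ Dtil_seg_eq_zero ht i q hq k hik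

variable (t) in
noncomputable def foldGrowth : (k : ℕ) → (TBundle (H := H) k : Type) →ₗ[ℚ] H
  | 0 => LinearMap.id
  | k + 1 => TensorProduct.lift (t ∘ₗ foldGrowth k)

lemma foldGrowth_pt (i : ℕ) (q : ℕ → H) :
    foldGrowth t i (pt i (fun m => q (m + 1))) = seg t q 1 (i + 1) := by
  induction i generalizing q with
  | zero => rfl
  | succ i ih =>
    change t (foldGrowth t i (pt i (fun m => q (m + 1 + 1)))) (q 1) = _
    rw [ih (fun n => q (n + 1)), seg_comp_add_right]
    rfl

lemma foldGrowth_Dtil_of_mem_Im (ht : HasGrowthCoproduct t) {i : ℕ} {y : H}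
    (hy : y ∈ Im t (i + 1)) : foldGrowth t i (Dtil i y) = y := by
  refine LinearMap.eqOn_span' (f := foldGrowth t i ∘ₗ Dtil i) (g := LinearMap.id) ?_ hy
  rintro _ ⟨q, hq, rfl⟩
  simp [Dtil_seg_eq_pt ht i q hq, foldGrowth_pt]

lemma eq_zero_of_smul_one_add_sum_Icc_succ (ht : HasGrowthCoproduct t) {c : ℚ} {n : ℕ}
    {x : ℕ → H} (hx : ∀ i, 1 ≤ i → i ≤ n + 1 → x i ∈ Im t i)
    (hsum : c • (1 : H) + ∑ i ∈ Finset.Icc 1 (n + 1), x i = 0) : x (n + 1) = 0 := by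
  have hlower : ∀ i ∈ Finset.Icc 1 n, Dtil n (x i) = 0 := by
    intro i hi
    obtain ⟨hi1, hin⟩ := Finset.mem_Icc.mp hi
    obtain ⟨i, rfl⟩ : ∃ i', i = i' + 1 := ⟨i - 1, by omega⟩
    exact Im_le_ker_Dtil ht (by omega) (hx _ hi1 (by omega))
  have htop : Dtil n (x (n + 1)) = 0 := by
    have h := congrArg (Dtil n) hsum
    rwa [Finset.sum_Icc_succ_top (by omega), map_zero, map_add, map_add, map_smul, Dtil_one,
      smul_zero, zero_add, map_sum, Finset.sum_eq_zero hlower, zero_add] at h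
  rw [← foldGrowth_Dtil_of_mem_Im ht (hx (n + 1) (by omega) le_rfl), htop, map_zero]

lemma eq_zero_of_smul_one_add_sum_Icc (ht : HasGrowthCoproduct t) (c : ℚ) (n : ℕ) (x : ℕ → H)
    (hx : ∀ i, 1 ≤ i → i ≤ n → x i ∈ Im t i)
    (hsum : c • (1 : H) + ∑ i ∈ Finset.Icc 1 n, x i = 0) :
    c = 0 ∧ ∀ i, 1 ≤ i → i ≤ n → x i = 0 := by
  induction n with
  | zero =>
    have h := congrArg (Coalgebra.counit (R := ℚ) (A := H)) hsum
    simp only [Finset.Icc_eq_empty_of_lt zero_lt_one, Finset.sum_empty, add_zero, map_smul,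
      Bialgebra.counit_one, smul_eq_mul, mul_one, map_zero] at h
    exact ⟨h, fun i h1 h2 => by omega⟩
  | succ n ih =>
    have htop := eq_zero_of_smul_one_add_sum_Icc_succ ht hx hsum
    rw [Finset.sum_Icc_succ_top (by omega), htop, add_zero] at hsum
    obtain ⟨hc, hlower⟩ := ih (fun i h1 h2 => hx i h1 (by omega)) hsum
    refine ⟨hc, fun i h1 h2 => ?_⟩
    rcases Nat.lt_or_ge i (n + 1) with h | h
    · exact hlower i h1 (by omega)
    · rwa [show i = n + 1 by omega]

end Growth

section Retraction

local notation "P" => (PrimSub (H := H) : Type)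

noncomputable def tprodCons (k : ℕ) :
    P →ₗ[ℚ] (⨂[ℚ] (_ : Fin (k + 1)), P) →ₗ[ℚ] ⨂[ℚ] (_ : Fin (k + 2)), P :=
  PiTensorProduct.lift.toLinearMap ∘ₗ
    MultilinearMap.curryLeft (PiTensorProduct.tprod ℚ (s := fun _ : Fin (k + 2) => P))

lemma tprodCons_tprod (k : ℕ) (p : P) (v : Fin (k + 1) → P) :
    tprodCons k p (PiTensorProduct.tprod ℚ v) = PiTensorProduct.tprod ℚ (Fin.cons p v) := by
  simp [tprodCons, MultilinearMap.curryLeft_apply]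

/-- `r ⊗ ⋯ ⊗ r`, from the left-nested power `H^{⊗(k+1)}` to the `PiTensorProduct` of `Prim H`. -/
noncomputable def toPiTensor (r : H →ₗ[ℚ] P) :
    (k : ℕ) → (TBundle (H := H) k : Type) →ₗ[ℚ] ⨂[ℚ] (_ : Fin (k + 1)), P
  | 0 => (PiTensorProduct.subsingletonEquiv (0 : Fin 1)).symm.toLinearMap ∘ₗ r
  | k + 1 => TensorProduct.lift (LinearMap.lcomp ℚ _ r ∘ₗ (tprodCons k).flip ∘ₗ toPiTensor r k)

lemma toPiTensor_pt {r : H →ₗ[ℚ] P} (hr : ∀ x : P, r x = x) (k : ℕ) (q : Fin (k + 1) → P) :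
    toPiTensor r k (pt k (fun m => (q m : H))) = PiTensorProduct.tprod ℚ q := by
  induction k with
  | zero =>
    change (PiTensorProduct.subsingletonEquiv (s := fun _ : Fin 1 => P) 0).symm (r (q 0 : H)) = _
    rw [hr, LinearEquiv.symm_apply_eq, PiTensorProduct.subsingletonEquiv_apply_tprod]
  | succ k ih =>
    change tprodCons k (r (q 0 : H)) (toPiTensor r k (pt k (fun m => (q m.succ : H)))) = _
    rw [hr, ih, tprodCons_tprod]
    exact congrArg _ (Fin.cons_self_tail q)

lemma injective_of_tprod_eq_seg {t : H →ₗ[ℚ] H →ₗ[ℚ] H} (ht : HasGrowthCoproduct t) {i : ℕ}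
    {F : (⨂[ℚ] (_ : Fin (i + 1)), P) →ₗ[ℚ] H}
    (hF : ∀ q : Fin (i + 1) → P, F (PiTensorProduct.tprod ℚ q)
      = seg t (fun m => if h : m - 1 < i + 1 then (q ⟨m - 1, h⟩ : H) else 0) 1 (i + 1)) :
    Function.Injective F := by
  obtain ⟨r, hr⟩ := (PrimSub (H := H)).subtype.exists_leftInverse_of_injective
    (Submodule.ker_subtype _)
  have hleft : (toPiTensor r i ∘ₗ Dtil i) ∘ₗ F = LinearMap.id := by
    refine PiTensorProduct.ext (MultilinearMap.ext fun q => ?_)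
    have hprim : ∀ k, 1 ≤ k → k ≤ i + 1 →
        (if h : k - 1 < i + 1 then (q ⟨k - 1, h⟩ : H) else 0) ∈ PrimSub :=
      fun k h1 h2 => by rw [dif_pos (by omega)]; exact (q _).2
    simp only [LinearMap.compMultilinearMap_apply, LinearMap.comp_apply, hF,
      Dtil_seg_eq_pt ht i _ hprim, Nat.add_sub_cancel, Fin.is_lt, dif_pos, Fin.eta,
      toPiTensor_pt (LinearMap.congr_fun hr), LinearMap.id_apply]
  exact Function.LeftInverse.injective (g := toPiTensor r i ∘ₗ Dtil i) (LinearMap.congr_fun hleft)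

end Retraction

/-- For the natural growth operation `⊤ = t` on the Hopf algebra of rooted trees and
`F_i(p_i ⊗ ... ⊗ p_1) = p_i ⊤ ... ⊤ p_1`: `Δ̃^{i−1} ∘ F_i` is the identity on
`Prim(H_R)^{⊗i}` (identified with its image in `H_R^{⊗i}`), `Δ̃^k ∘ F_i = 0` for
`k > i−1`, each `F_i` is injective, and the sum `ℚ·1 + Σ_{i≥1} Im(F_i)` is direct.
(Here `i` is written as `i+1` so that the statement covers all `i ≥ 1`.) -/
theorem Fi_section_injective_direct
    (t : H →ₗ[ℚ] H →ₗ[ℚ] H)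
    -- the iterated natural-growth coproduct formula for primitive elements
    (hgrowth : ∀ (q : ℕ → H) (m : ℕ), 1 ≤ m →
      (∀ k, 1 ≤ k → k ≤ m → q k ∈ PrimSub) →
      rcomulL (seg t q 1 m)
        = ∑ j ∈ Finset.Icc 1 (m - 1), seg t q (j + 1) m ⊗ₜ[ℚ] seg t q 1 j) :
    -- (a) `Δ̃^{i-1} ∘ F_i = Id` on pure tensors of primitives
    (∀ i : ℕ, ∀ p : ℕ → H, (∀ k, 1 ≤ k → k ≤ i + 1 → p k ∈ PrimSub) →
      Dtil i (seg t p 1 (i + 1)) = pt i (fun m : Fin (i + 1) => p ((m : ℕ) + 1))) ∧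
    -- (b) `Δ̃^k ∘ F_i = 0` for `k > i − 1`
    (∀ i : ℕ, ∀ p : ℕ → H, (∀ k, 1 ≤ k → k ≤ i + 1 → p k ∈ PrimSub) →
      ∀ k : ℕ, i < k → Dtil k (seg t p 1 (i + 1)) = 0) ∧
    -- (c) each `F_i` is injective
    (∀ i : ℕ,
      ∀ F : (⨂[ℚ] (_ : Fin (i + 1)), (PrimSub (H := H) : Type)) →ₗ[ℚ] H,
        (∀ q : Fin (i + 1) → PrimSub (H := H),
          F (PiTensorProduct.tprod ℚ q)
            = seg t (fun m : ℕ =>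
                if h : m - 1 < i + 1 then (q ⟨m - 1, h⟩ : H) else 0) 1 (i + 1)) →
        Function.Injective F) ∧
    -- (d) the sum `ℚ·1 + Σ_{i ≥ 1} Im(F_i)` is direct
    (∀ (c : ℚ) (n : ℕ) (x : ℕ → H),
      (∀ i, 1 ≤ i → i ≤ n → x i ∈ Im t i) →
      c • (1 : H) + ∑ i ∈ Finset.Icc 1 n, x i = 0 →
      c = 0 ∧ ∀ i, 1 ≤ i → i ≤ n → x i = 0) := by
  exact ⟨Dtil_seg_eq_pt hgrowth, Dtil_seg_eq_zero hgrowth,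
    fun _ _ => injective_of_tprod_eq_seg hgrowth, eq_zero_of_smul_one_add_sum_Icc hgrowth⟩

end
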